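/- arXiv:2212.12764 — 2 statements merged into one kernel-verified Lean document; each statement's English description precedes it below -/
import Mathlib

section
/- Every finite directed graph (without self-loops) has a quasi-kernel. -/
/-- A finite directed graph without self-loops: a finite vertex set together with a
(decidable) arc relation whose arcs join vertices and which has no self-loops. -/
structure FinDigraph (α : Type) [DecidableEq α] where
  verts : Finset α
  adj : α → α → Bool
  adj_mem_left : ∀ u v, adj u v = true → u ∈ verts
  adj_mem_right : ∀ u v, adj u v = true → v ∈ verts
  no_loops : ∀ u, adj u u = false

namespace FinDigraph

variable {α : Type} [DecidableEq α]

/-- The open out-neighborhood `N⁺(u)`. -/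
def outNbhd (D : FinDigraph α) (u : α) : Finset α := D.verts.filter (fun v => D.adj u v)

/-- The closed out-neighborhood `N⁺[u] = N⁺(u) ∪ {u}`. -/
def closedNbhd (D : FinDigraph α) (u : α) : Finset α := insert u (D.outNbhd u)

/-- The out-degree `d⁺(u) = |N⁺(u)|`. -/
def outDeg (D : FinDigraph α) (u : α) : ℕ := (D.outNbhd u).card

/-- `D − S`: the subgraph induced by `V(D) − S`. -/
def del (D : FinDigraph α) (S : Finset α) : FinDigraph α where
  verts := D.verts \ S
  adj := fun u v => D.adj u v && decide (u ∉ S) && decide (v ∉ S)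
  adj_mem_left := by
    intro u v h
    simp only [Bool.and_eq_true, decide_eq_true_eq] at h
    exact Finset.mem_sdiff.2 ⟨D.adj_mem_left u v h.1.1, h.1.2⟩
  adj_mem_right := by
    intro u v h
    simp only [Bool.and_eq_true, decide_eq_true_eq] at h
    exact Finset.mem_sdiff.2 ⟨D.adj_mem_right u v h.1.1, h.2⟩
  no_loops := by intro u; simp [D.no_loops u]

/-- A source: a vertex with no ingoing arc. -/
def IsSource (D : FinDigraph α) (u : α) : Prop := u ∈ D.verts ∧ ∀ v, D.adj v u = false

/-- The set of sources of `D`. -/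
def sources (D : FinDigraph α) : Finset α :=
  D.verts.filter (fun u => ∀ v ∈ D.verts, D.adj v u = false)

/-- A quasi-kernel: an independent set `Q ⊆ V(D)` such that every vertex of `D`
is in `Q`, has an in-neighbor in `Q`, or is reachable in two steps from `Q`. -/
def IsQuasiKernel (D : FinDigraph α) (Q : Finset α) : Prop :=
  Q ⊆ D.verts ∧
  (∀ u ∈ Q, ∀ v ∈ Q, D.adj u v = false) ∧
  (∀ w ∈ D.verts, w ∈ Q ∨ (∃ v ∈ Q, D.adj v w = true) ∨
    (∃ u ∈ Q, ∃ v, D.adj u v = true ∧ D.adj v w = true))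

/-- Breakdown sequences (Definition 3 of the paper). -/
inductive IsBDS : FinDigraph α → List (α × Finset α) → Prop where
  | nil (D : FinDigraph α) : D.verts = ∅ → IsBDS D []
  | isolated (D : FinDigraph α) (u : α) (B : List (α × Finset α)) :
      (∀ x y, D.adj x y = false) → u ∈ D.verts →
      IsBDS (D.del {u}) B → IsBDS D ((u, (∅ : Finset α)) :: B)
  | step (D : FinDigraph α) (u : α) (B : List (α × Finset α)) :
      u ∈ D.verts → 0 < D.outDeg u →
      ((D.del (D.closedNbhd u)).sources \ D.sources).card ≤ D.outDeg u →
      IsBDS (D.del (D.closedNbhd u)) B → IsBDS D ((u, D.outNbhd u) :: B)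

/-- `F(B)`: the set of first components of the pairs in `B`. -/
def F (B : List (α × Finset α)) : Finset α := (B.map Prod.fst).toFinset

/-- A quasi-kernel `Q` is constructive with regard to `B` and `D`
(Definition 5 of the paper). -/
def IsConstructive (D : FinDigraph α) (B : List (α × Finset α)) (Q : Finset α) : Prop :=
  IsQuasiKernel D Q ∧
  ∀ p ∈ B, p.1 ∈ Q ∨ (∃ v ∈ Q, D.adj v p.1 = true) ∨
    (p.2 = ∅ ∧ ∃ u v M, ((u : α), (M : Finset α)) ∈ B ∧ v ∈ M ∧ D.adj v p.1 = true)

end FinDigraph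

/-! Induction on the number of vertices. Pick a vertex `v` and a quasi-kernel `Q` of
`D − N⁺[v]`. If some vertex of `Q` has an arc to `v`, then `Q` reaches all of `N⁺[v]` within
two steps and is a quasi-kernel of `D`. Otherwise `Q ∪ {v}` is one: `Q` avoids `N⁺[v]`, so there
is no arc between `v` and `Q`, and `v` reaches `N⁺[v]` in one step. -/

namespace FinDigraph

variable {α : Type} [DecidableEq α] (D : FinDigraph α)

def AbsorbsWithinTwo (Q : Finset α) (w : α) : Prop :=
  w ∈ Q ∨ (∃ v ∈ Q, D.adj v w = true) ∨ (∃ u ∈ Q, ∃ v, D.adj u v = true ∧ D.adj v w = true)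

def IsIndependent (Q : Finset α) : Prop := ∀ u ∈ Q, ∀ v ∈ Q, D.adj u v = false

theorem isQuasiKernel_iff (Q : Finset α) :
    D.IsQuasiKernel Q ↔
      Q ⊆ D.verts ∧ D.IsIndependent Q ∧ ∀ w ∈ D.verts, D.AbsorbsWithinTwo Q w :=
  Iff.rfl

theorem del_adj_eq_true {S : Finset α} {x y : α} :
    (D.del S).adj x y = true ↔ D.adj x y = true ∧ x ∉ S ∧ y ∉ S := by
  simp [del, and_assoc]

theorem adj_of_del_adj {S : Finset α} {x y : α} (h : (D.del S).adj x y = true) :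
    D.adj x y = true :=
  ((D.del_adj_eq_true).1 h).1

theorem mem_closedNbhd {v w : α} : w ∈ D.closedNbhd v ↔ w = v ∨ D.adj v w = true := by
  simp only [closedNbhd, outNbhd, Finset.mem_insert, Finset.mem_filter]
  exact or_congr_right ⟨And.right, fun h => ⟨D.adj_mem_right v w h, h⟩⟩

theorem closedNbhd_subset_verts {v : α} (hv : v ∈ D.verts) : D.closedNbhd v ⊆ D.verts := by
  intro w hw
  rcases D.mem_closedNbhd.1 hw with rfl | hvw
  · exact hv
  · exact D.adj_mem_right v w hvw

theorem card_del_closedNbhd_lt {v : α} (hv : v ∈ D.verts) :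
    (D.del (D.closedNbhd v)).verts.card < D.verts.card :=
  Finset.card_lt_card <| Finset.sdiff_ssubset (D.closedNbhd_subset_verts hv)
    ⟨v, D.mem_closedNbhd.2 (Or.inl rfl)⟩

variable {D}

theorem AbsorbsWithinTwo.mono {Q Q' : Finset α} {w : α} (h : D.AbsorbsWithinTwo Q w)
    (hQ : Q ⊆ Q') : D.AbsorbsWithinTwo Q' w := by
  rcases h with h | ⟨v, hv, hvw⟩ | ⟨u, hu, v, huv, hvw⟩
  · exact Or.inl (hQ h)
  · exact Or.inr (Or.inl ⟨v, hQ hv, hvw⟩)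
  · exact Or.inr (Or.inr ⟨u, hQ hu, v, huv, hvw⟩)

theorem AbsorbsWithinTwo.of_del {S Q : Finset α} {w : α} (h : (D.del S).AbsorbsWithinTwo Q w) :
    D.AbsorbsWithinTwo Q w := by
  rcases h with h | ⟨v, hv, hvw⟩ | ⟨u, hu, v, huv, hvw⟩
  · exact Or.inl h
  · exact Or.inr (Or.inl ⟨v, hv, D.adj_of_del_adj hvw⟩)
  · exact Or.inr (Or.inr ⟨u, hu, v, D.adj_of_del_adj huv, D.adj_of_del_adj hvw⟩)

theorem absorbsWithinTwo_of_mem_closedNbhd {Q : Finset α} {v w : α} (hv : v ∈ Q)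
    (hw : w ∈ D.closedNbhd v) : D.AbsorbsWithinTwo Q w := by
  rcases D.mem_closedNbhd.1 hw with rfl | hvw
  · exact Or.inl hv
  · exact Or.inr (Or.inl ⟨v, hv, hvw⟩)

theorem absorbsWithinTwo_of_adj_of_mem_closedNbhd {Q : Finset α} {u v w : α} (hu : u ∈ Q)
    (huv : D.adj u v = true) (hw : w ∈ D.closedNbhd v) : D.AbsorbsWithinTwo Q w := by
  rcases D.mem_closedNbhd.1 hw with rfl | hvw
  · exact Or.inr (Or.inl ⟨u, hu, huv⟩)
  · exact Or.inr (Or.inr ⟨u, hu, v, huv, hvw⟩)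

theorem IsIndependent.of_del {S Q : Finset α} (hQS : Q ⊆ (D.del S).verts)
    (hQ : (D.del S).IsIndependent Q) : D.IsIndependent Q := by
  intro u hu w hw
  refine Bool.eq_false_iff.2 fun h => ?_
  have hdel : (D.del S).adj u w = true :=
    D.del_adj_eq_true.2 ⟨h, (Finset.mem_sdiff.1 (hQS hu)).2, (Finset.mem_sdiff.1 (hQS hw)).2⟩
  exact Bool.false_ne_true (hQ u hu w hw ▸ hdel)

theorem IsIndependent.insert {Q : Finset α} {v : α} (hQ : D.IsIndependent Q)
    (hout : ∀ w ∈ Q, D.adj v w = false) (hin : ∀ u ∈ Q, D.adj u v = false) :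
    D.IsIndependent (insert v Q) := by
  intro u hu w hw
  rcases Finset.mem_insert.1 hu with rfl | huQ <;> rcases Finset.mem_insert.1 hw with rfl | hwQ
  · exact D.no_loops _
  · exact hout w hwQ
  · exact hin u huQ
  · exact hQ u huQ w hwQ

theorem IsQuasiKernel.of_del_closedNbhd_of_adj {v u : α} {Q : Finset α}
    (hQ : (D.del (D.closedNbhd v)).IsQuasiKernel Q) (hu : u ∈ Q) (huv : D.adj u v = true) :
    D.IsQuasiKernel Q := by
  obtain ⟨hQV, hind, habs⟩ := (isQuasiKernel_iff _ Q).1 hQ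
  refine ⟨hQV.trans Finset.sdiff_subset, hind.of_del hQV, fun w hw => ?_⟩
  by_cases hwS : w ∈ D.closedNbhd v
  · exact absorbsWithinTwo_of_adj_of_mem_closedNbhd hu huv hwS
  · exact (habs w (Finset.mem_sdiff.2 ⟨hw, hwS⟩)).of_del

theorem IsQuasiKernel.insert_of_del_closedNbhd {v : α} {Q : Finset α} (hv : v ∈ D.verts)
    (hQ : (D.del (D.closedNbhd v)).IsQuasiKernel Q) (hin : ∀ u ∈ Q, D.adj u v = false) :
    D.IsQuasiKernel (insert v Q) := by
  obtain ⟨hQV, hind, habs⟩ := (isQuasiKernel_iff _ Q).1 hQ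
  have hout : ∀ w ∈ Q, D.adj v w = false := fun w hw => Bool.eq_false_iff.2 fun hvw =>
    (Finset.mem_sdiff.1 (hQV hw)).2 (D.mem_closedNbhd.2 (Or.inr hvw))
  refine ⟨Finset.insert_subset hv (hQV.trans Finset.sdiff_subset),
    (hind.of_del hQV).insert hout hin, fun w hw => ?_⟩
  by_cases hwS : w ∈ D.closedNbhd v
  · exact absorbsWithinTwo_of_mem_closedNbhd (Finset.mem_insert_self v Q) hwS
  · exact (habs w (Finset.mem_sdiff.2 ⟨hw, hwS⟩)).of_del.mono (Finset.subset_insert v Q)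

theorem IsQuasiKernel.exists_of_del_closedNbhd {v : α} {Q : Finset α} (hv : v ∈ D.verts)
    (hQ : (D.del (D.closedNbhd v)).IsQuasiKernel Q) : ∃ Q', D.IsQuasiKernel Q' := by
  by_cases h : ∃ u ∈ Q, D.adj u v = true
  · obtain ⟨u, hu, huv⟩ := h
    exact ⟨Q, hQ.of_del_closedNbhd_of_adj hu huv⟩
  · simp only [not_exists, not_and, Bool.not_eq_true] at h
    exact ⟨insert v Q, hQ.insert_of_del_closedNbhd hv h⟩

end FinDigraph

/-- Every finite directed graph (without self-loops) has a quasi-kernel. -/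
theorem every_digraph_has_quasiKernel {α : Type} [DecidableEq α] (D : FinDigraph α) :
    ∃ Q : Finset α, D.IsQuasiKernel Q := by
  induction hn : D.verts.card using Nat.strong_induction_on generalizing D with
  | _ n ih =>
  rcases D.verts.eq_empty_or_nonempty with hempty | ⟨v, hv⟩
  · exact ⟨∅, by simp [FinDigraph.IsQuasiKernel, hempty]⟩
  · obtain ⟨Q, hQ⟩ := ih _ (hn ▸ D.card_del_closedNbhd_lt hv) _ rfl
    exact hQ.exists_of_del_closedNbhd hv
end

section
/- Let D be a finite directed graph without self-loops, let v ∈ V(D), and let Q' be a quasi-kernel of the induced subgraph D − N⁺[v] obtained by deleting v and all of its out-neighbors. If there exists u ∈ Q' with u ⟶ v, then Q' is a quasi-kernel of D. -/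
/-! Arcs of `D − S` are arcs of `D`, and between vertices outside `S` they are exactly the arcs
of `D`; so `Q'` stays independent in `D` and still absorbs every vertex outside `N⁺[v]`. The
vertices of `N⁺[v]` are absorbed through `u ⟶ v`. -/

namespace FinDigraph

variable {α : Type} [DecidableEq α] {D : FinDigraph α} {S Q : Finset α} {u v w : α}

theorem del_adj_iff : (D.del S).adj u v = true ↔ D.adj u v = true ∧ u ∉ S ∧ v ∉ S := by
  simp [del, and_assoc]

theorem del_adj_eq_false_iff (hu : u ∉ S) (hv : v ∉ S) :
    (D.del S).adj u v = false ↔ D.adj u v = false := by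
  simp [del, hu, hv]

def Absorbs (D : FinDigraph α) (Q : Finset α) (w : α) : Prop :=
  w ∈ Q ∨ (∃ v ∈ Q, D.adj v w = true) ∨ ∃ u ∈ Q, ∃ v, D.adj u v = true ∧ D.adj v w = true

theorem Absorbs.of_del (h : (D.del S).Absorbs Q w) : D.Absorbs Q w := by
  rcases h with hw | ⟨v, hv, hvw⟩ | ⟨u, hu, v, huv, hvw⟩
  · exact Or.inl hw
  · exact Or.inr (Or.inl ⟨v, hv, (del_adj_iff.1 hvw).1⟩)
  · exact Or.inr (Or.inr ⟨u, hu, v, (del_adj_iff.1 huv).1, (del_adj_iff.1 hvw).1⟩)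

theorem absorbs_of_mem_closedNbhd (hu : u ∈ Q) (huv : D.adj u v = true)
    (hw : w ∈ D.closedNbhd v) : D.Absorbs Q w := by
  rcases Finset.mem_insert.1 hw with rfl | hw
  · exact Or.inr (Or.inl ⟨u, hu, huv⟩)
  · exact Or.inr (Or.inr ⟨u, hu, v, huv, (Finset.mem_filter.1 hw).2⟩)

theorem IsQuasiKernel.of_del (hQ : (D.del S).IsQuasiKernel Q)
    (hS : ∀ w ∈ D.verts, w ∈ S → D.Absorbs Q w) : D.IsQuasiKernel Q := by
  obtain ⟨hsub, hind, habs⟩ := hQ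
  have hQS : ∀ q ∈ Q, q ∈ D.verts ∧ q ∉ S := fun q hq => Finset.mem_sdiff.1 (hsub hq)
  refine ⟨fun q hq => (hQS q hq).1, fun a ha b hb => ?_, fun w hw => ?_⟩
  · exact (del_adj_eq_false_iff (hQS a ha).2 (hQS b hb).2).1 (hind a ha b hb)
  · by_cases hwS : w ∈ S
    · exact hS w hw hwS
    · exact Absorbs.of_del (habs w (Finset.mem_sdiff.2 ⟨hw, hwS⟩))

end FinDigraph

theorem quasiKernel_of_del_closedNbhd_of_arc_general {α : Type} [DecidableEq α]
    (D : FinDigraph α) (v : α) (Q' : Finset α)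
    (hQ' : (D.del (D.closedNbhd v)).IsQuasiKernel Q')
    (h : ∃ u ∈ Q', D.adj u v = true) :
    D.IsQuasiKernel Q' := by
  obtain ⟨u, hu, huv⟩ := h
  exact hQ'.of_del fun _ _ hw => FinDigraph.absorbs_of_mem_closedNbhd hu huv hw

/-- If `Q'` is a quasi-kernel of `D − N⁺[v]` and some `u ∈ Q'` satisfies
`u ⟶ v`, then `Q'` is a quasi-kernel of `D`. -/
theorem quasiKernel_of_del_closedNbhd_of_arc {α : Type} [DecidableEq α]
    (D : FinDigraph α) (v : α) (hv : v ∈ D.verts) (Q' : Finset α)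
    (hQ' : (D.del (D.closedNbhd v)).IsQuasiKernel Q')
    (h : ∃ u ∈ Q', D.adj u v = true) :
    D.IsQuasiKernel Q' :=
  quasiKernel_of_del_closedNbhd_of_arc_general D v Q' hQ' h
end
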